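/- Let H = (V,E,ω) with V = {v₁,…,v_n}, n ≥ 3, such that e_{1i}, e_{i1} ∉ E for all 2 ≤ i ≤ n (so v₁ has no edges except possibly its loop), ω(e₁₁) = ω(e₂₂), and e₃₂ ∈ E. Let H̃ be the graph obtained from H by replacing the edge e₃₂ by the edge e₃₁ with the same weight, and adding edges e_{1i} with ω(e_{1i}) = ω(e_{2i}) for all 3 ≤ i ≤ n (so that the out-neighborhoods of v₁ and v₂ agree with equal weights). Then det(M(H) − λI) = det(M(H̃) − λI) as rational functions, and hence σ(H) = σ(H̃). -/

import Mathlib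

open scoped Classical

noncomputable section

/-- A finite weighted digraph with weights in the field `𝕎 = RatFunc ℂ` of complex
rational functions: a finite vertex set together with a weight function, where
weight `0` encodes the absence of an edge (no parallel edges, loops allowed). -/
structure WDigraph (V : Type*) [Fintype V] [DecidableEq V] where
  verts : Finset V
  w : V → V → RatFunc ℂ

namespace WDigraph

variable {V : Type*} [Fintype V] [DecidableEq V]

/-- Membership in `𝔾`: all edges (nonzero weights) join vertices of `G`. -/
def Wf (G : WDigraph V) : Prop :=
  ∀ u v, G.w u v ≠ 0 → u ∈ G.verts ∧ v ∈ G.verts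

/-- `det (M(G) - λ I)` as an element of `𝕎`. -/
def charDet (G : WDigraph V) : RatFunc ℂ :=
  Matrix.det (Matrix.of fun i j : G.verts =>
    G.w i.1 j.1 - if i = j then (RatFunc.X : RatFunc ℂ) else 0)

/-- The spectrum of `G`: the list (multiset) of complex solutions, with
multiplicity, of `det (M(G,λ) - λ I) = 0`. -/
def spec (G : WDigraph V) : Multiset ℂ := G.charDet.num.roots

/-- Membership in `𝔾_π`: every adjacency matrix entry `p/q` has `π(p/q) = deg p - deg q ≤ 0`. -/
def PiNonpos (G : WDigraph V) : Prop :=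
  ∀ u v, (G.w u v).num.degree ≤ (G.w u v).denom.degree

end WDigraph

/-- Two spectra (lists) differ at most by the set `N`: after removing all entries
with values in `N` they agree. -/
def SpecDiffAtMost (s₁ s₂ : Multiset ℂ) (N : Set ℂ) : Prop :=
  s₁.filter (fun z => z ∉ N) = s₂.filter (fun z => z ∉ N)

variable {V : Type*} [Fintype V] [DecidableEq V]

/-- `S` is a structural set of `G`: `S` is a nonempty subset of the vertices, the
complement of `S` induces no cycles in `ℓ(G)` (i.e. no closed walk through
consecutive-distinct vertices all lying outside `S`), and no loop at a vertex
outside `S` has weight `λ`. -/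
def IsStructuralSet (G : WDigraph V) (S : Finset V) : Prop :=
  S.Nonempty ∧ S ⊆ G.verts ∧
    (∀ v, ¬ Relation.TransGen
      (fun a b => a ∈ G.verts ∧ b ∈ G.verts ∧ a ∉ S ∧ b ∉ S ∧ a ≠ b ∧ G.w a b ≠ 0) v v) ∧
    ∀ v ∈ G.verts, v ∉ S → G.w v v ≠ RatFunc.X

/-- `β` is a branch of `G` from `u` to `v` with respect to `S`: a path or cycle
from `u` to `v` in `G` all of whose interior vertices lie outside `S`. -/
def IsBranch (G : WDigraph V) (S : Finset V) (u v : V) (β : List V) : Prop :=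
  u ∈ S ∧ v ∈ S ∧
    ∃ int : List V, β = u :: (int ++ [v]) ∧
      (∀ x ∈ int, x ∈ G.verts ∧ x ∉ S) ∧
      (u :: int).Nodup ∧ v ∉ int ∧
      List.Chain' (fun a b => G.w a b ≠ 0) β

/-- The branch product `𝒫_ω(β)` of a branch `β = v₁, …, v_m`. -/
def branchProd {V : Type*} (w : V → V → RatFunc ℂ) : List V → RatFunc ℂ
  | [] => 0
  | [_] => 0
  | [a, b] => w a b
  | a :: b :: c :: rest => w a b * branchProd w (b :: c :: rest) / (RatFunc.X - w b b)

/-- The isospectral reduction `R_S(G)`: the graph on vertex set `S` whose weight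
from `u` to `v` is the sum of the branch products of all branches from `u` to
`v` with respect to `S`. -/
def WDigraph.reduce (G : WDigraph V) (S : Finset V) : WDigraph V where
  verts := S
  w := fun u v => ∑ᶠ β ∈ {β : List V | IsBranch G S u v β}, branchProd G.w β

/-- The set `N(G;S)`: all `z ∈ ℂ` such that for some vertex `v` of `G` off `S`,
either `z = ω(e_vv)(z)` or `ω(e_vv)` is undefined at `z`. -/
def NSet (G : WDigraph V) (S : Finset V) : Set ℂ :=
  {z | ∃ v ∈ G.verts, v ∉ S ∧
    ((RatFunc.X - G.w v v).num.eval z = 0 ∨ (G.w v v).denom.eval z = 0)}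

/-- Isomorphism of weighted digraphs: a vertex bijection carrying edges to edges
and preserving weights. -/
def WDigraph.Isom {V₁ : Type*} [Fintype V₁] [DecidableEq V₁]
    {V₂ : Type*} [Fintype V₂] [DecidableEq V₂]
    (G : WDigraph V₁) (H : WDigraph V₂) : Prop :=
  ∃ ρ : G.verts ≃ H.verts, ∀ u v : G.verts, H.w (ρ u).1 (ρ v).1 = G.w u.1 v.1

/-!
Conjugating `M(H̃) - λI` by the transvection that subtracts row `v₂` from row `v₁` (and hence
adds column `v₁` to column `v₂`) undoes the copy of `v₂`'s out-neighbourhood in row `v₁` and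
moves the weight `ω(e₃₂)` back from column `v₁` to column `v₂`, except for a leftover entry at
`(v₃, v₁)`. Since the row of `v₁` in `M(H) - λI` vanishes off the diagonal, that entry does not
affect the determinant.
-/

namespace Matrix

def separateBranch {n α : Type*} [DecidableEq n] [Zero α] (M : Matrix n n α) (i₁ i₂ i₃ : n) :
    Matrix n n α :=
  of fun x y =>
    if x = i₃ ∧ y = i₂ then 0
    else if x = i₃ ∧ y = i₁ then M i₃ i₂
    else if x = i₁ ∧ y ≠ i₁ ∧ y ≠ i₂ then M i₂ y
    else M x y

variable {n R : Type*} [Fintype n] [DecidableEq n] [CommRing R]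

theorem det_add_single_of_row_eq_zero {M : Matrix n n R} {i j : n}
    (hrow : ∀ y ≠ i, M i y = 0) (hji : j ≠ i) (c : R) :
    (M + single j i c).det = M.det := by
  have hcol : M + single j i c = M.updateCol i ((fun k => M k i) + Pi.single j c) := by
    ext x y
    rcases eq_or_ne y i with rfl | hy
    · simp [single_apply, Pi.single_apply, eq_comm]
    · simp [hy, Ne.symm hy]
  have hzero : (M.updateCol i (Pi.single j c)).det = 0 :=
    det_eq_zero_of_row_eq_zero i fun y => by
      rcases eq_or_ne y i with rfl | hy
      · simp [hji.symm]
      · simp [hy, hrow y hy]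
  rw [hcol, det_updateCol_add, updateCol_eq_self, hzero, add_zero]

theorem transvection_mul_separateBranch_mul_transvection {M : Matrix n n R} {i₁ i₂ i₃ : n}
    (h12 : i₁ ≠ i₂) (h13 : i₁ ≠ i₃) (h23 : i₂ ≠ i₃)
    (hrow : ∀ y ≠ i₁, M i₁ y = 0) (hcol : ∀ x ≠ i₁, M x i₁ = 0) (hdiag : M i₁ i₁ = M i₂ i₂) :
    transvection i₁ i₂ (-1) * M.separateBranch i₁ i₂ i₃ * transvection i₁ i₂ 1 =
      M + single i₃ i₁ (M i₃ i₂) := by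
  ext x y
  by_cases hx1 : x = i₁ <;> by_cases hx3 : x = i₃ <;> by_cases hy1 : y = i₁ <;>
    by_cases hy2 : y = i₂ <;> simp_all [separateBranch, single_apply, eq_comm]

theorem det_separateBranch {M : Matrix n n R} {i₁ i₂ i₃ : n}
    (h12 : i₁ ≠ i₂) (h13 : i₁ ≠ i₃) (h23 : i₂ ≠ i₃)
    (hrow : ∀ y ≠ i₁, M i₁ y = 0) (hcol : ∀ x ≠ i₁, M x i₁ = 0) (hdiag : M i₁ i₁ = M i₂ i₂) :
    (M.separateBranch i₁ i₂ i₃).det = M.det := by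
  have hconj := congrArg det
    (transvection_mul_separateBranch_mul_transvection h12 h13 h23 hrow hcol hdiag)
  rwa [det_mul, det_mul, det_transvection_of_ne _ _ h12, det_transvection_of_ne _ _ h12,
    one_mul, mul_one, det_add_single_of_row_eq_zero hrow (Ne.symm h13)] at hconj

end Matrix

namespace WDigraph

def charMatrix (G : WDigraph V) : Matrix G.verts G.verts (RatFunc ℂ) :=
  Matrix.of fun i j => G.w i.1 j.1 - if i = j then (RatFunc.X : RatFunc ℂ) else 0

theorem charDet_eq_det_charMatrix (G : WDigraph V) : G.charDet = G.charMatrix.det := rfl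

theorem charMatrix_apply_of_ne (G : WDigraph V) {i j : G.verts} (hij : i ≠ j) :
    G.charMatrix i j = G.w i j := by
  simp [charMatrix, hij]

theorem charDet_eq_det_separateBranch {H H' : WDigraph V} {v₁ v₂ v₃ : V}
    (h13 : v₁ ≠ v₃) (h23 : v₂ ≠ v₃)
    (hm1 : v₁ ∈ H.verts) (hm2 : v₂ ∈ H.verts) (hm3 : v₃ ∈ H.verts)
    (hverts : H'.verts = H.verts)
    (hw' : H'.w = fun x y =>
      if x = v₃ ∧ y = v₂ then 0
      else if x = v₃ ∧ y = v₁ then H.w v₃ v₂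
      else if x = v₁ ∧ y ≠ v₁ ∧ y ≠ v₂ then H.w v₂ y
      else H.w x y) :
    H'.charDet = (H.charMatrix.separateBranch ⟨v₁, hm1⟩ ⟨v₂, hm2⟩ ⟨v₃, hm3⟩).det := by
  obtain ⟨verts', w'⟩ := H'
  dsimp only at hverts hw'
  subst hverts hw'
  rw [charDet_eq_det_charMatrix]
  congr 1
  ext ⟨x, hx⟩ ⟨y, hy⟩
  simp only [charMatrix, Matrix.separateBranch, Matrix.of_apply, Subtype.mk.injEq]
  split_ifs <;> grind

end WDigraph

theorem branch_separation_general
    (H : WDigraph V)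
    (v₁ v₂ v₃ : V) (h12 : v₁ ≠ v₂) (h13 : v₁ ≠ v₃) (h23 : v₂ ≠ v₃)
    (hm1 : v₁ ∈ H.verts) (hm2 : v₂ ∈ H.verts) (hm3 : v₃ ∈ H.verts)
    (hv₁ : ∀ u, u ≠ v₁ → H.w v₁ u = 0 ∧ H.w u v₁ = 0)
    (hloop : H.w v₁ v₁ = H.w v₂ v₂)
    (H' : WDigraph V)
    (hverts : H'.verts = H.verts)
    (hw' : H'.w = fun x y =>
      if x = v₃ ∧ y = v₂ then 0
      else if x = v₃ ∧ y = v₁ then H.w v₃ v₂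
      else if x = v₁ ∧ y ≠ v₁ ∧ y ≠ v₂ then H.w v₂ y
      else H.w x y) :
    H.charDet = H'.charDet ∧ H.spec = H'.spec := by
  set i₁ : H.verts := ⟨v₁, hm1⟩
  have hne : ∀ {i : H.verts}, i ≠ i₁ → i.1 ≠ v₁ := fun hi h => hi (Subtype.ext h)
  have hdet : H.charDet = H'.charDet := by
    rw [WDigraph.charDet_eq_det_separateBranch h13 h23 hm1 hm2 hm3 hverts hw',
      Matrix.det_separateBranch (by simpa using h12) (by simpa using h13) (by simpa using h23)
        (fun y hy => by rw [H.charMatrix_apply_of_ne hy.symm]; exact (hv₁ y (hne hy)).1)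
        (fun x hx => by rw [H.charMatrix_apply_of_ne hx]; exact (hv₁ x (hne hx)).2)
        (by simp [WDigraph.charMatrix, hloop]),
      WDigraph.charDet_eq_det_charMatrix]
  exact ⟨hdet, by rw [WDigraph.spec, WDigraph.spec, hdet]⟩

/-- (The determinant identity in the proof of Lemma 1.) Let `H` have vertices
`v₁,…,v_n`, `n ≥ 3`, with `v₁` incident to no edges other than possibly its loop,
`ω(e₁₁) = ω(e₂₂)`, and `e₃₂ ∈ E`. Let `H̃` be obtained from `H` by replacing `e₃₂`
by `e₃₁` (with the same weight) and giving `v₁` the same out-neighborhood as `v₂`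
(with equal weights, towards each vertex other than `v₁, v₂`). Then
`det(M(H) - λI) = det(M(H̃) - λI)` and hence `σ(H) = σ(H̃)`. -/
theorem branch_separation
    (H : WDigraph V) (hH : H.Wf) (hcard : 3 ≤ H.verts.card)
    (v₁ v₂ v₃ : V) (h12 : v₁ ≠ v₂) (h13 : v₁ ≠ v₃) (h23 : v₂ ≠ v₃)
    (hm1 : v₁ ∈ H.verts) (hm2 : v₂ ∈ H.verts) (hm3 : v₃ ∈ H.verts)
    (hv₁ : ∀ u, u ≠ v₁ → H.w v₁ u = 0 ∧ H.w u v₁ = 0)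
    (hloop : H.w v₁ v₁ = H.w v₂ v₂)
    (he32 : H.w v₃ v₂ ≠ 0)
    (H' : WDigraph V)
    (hverts : H'.verts = H.verts)
    (hw' : H'.w = fun x y =>
      if x = v₃ ∧ y = v₂ then 0
      else if x = v₃ ∧ y = v₁ then H.w v₃ v₂
      else if x = v₁ ∧ y ≠ v₁ ∧ y ≠ v₂ then H.w v₂ y
      else H.w x y) :
    H.charDet = H'.charDet ∧ H.spec = H'.spec :=
  branch_separation_general H v₁ v₂ v₃ h12 h13 h23 hm1 hm2 hm3 hv₁ hloop H' hverts hw'
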